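/- arXiv:2309.01358 — 2 statements merged into one kernel-verified Lean document; each statement's English description precedes it below -/
import Mathlib

section
/- For every graph G in class B with associated tree T_G, the eccentricity of each vertex a of T_G computed in G equals the eccentricity of a computed in T_G. -/
open SimpleGraph

variable {V : Type*}

/-- `v` is a cut-vertex of the graph `G`: deleting `v` disconnects `G`. -/
def CutVtx (G : SimpleGraph V) (v : V) : Prop :=
  ¬ (G.induce {v}ᶜ).Connected

/-- A nonseparable graph: connected and with no cut-vertex. -/
def NoCutVtx {W : Type*} (H : SimpleGraph W) : Prop :=
  H.Connected ∧ ∀ w : W, (H.induce {w}ᶜ).Connected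

/-- `B` is (the vertex set of) a block of `G`: a maximal nonseparable
induced subgraph. -/
def IsBlockSet (G : SimpleGraph V) (B : Set V) : Prop :=
  NoCutVtx (G.induce B) ∧ ∀ C : Set V, B ⊆ C → NoCutVtx (G.induce C) → B = C

/-- The set of cut-vertices of `G`. -/
def cutSet (G : SimpleGraph V) : Set V := {v | CutVtx G v}

/-- The set `B` induces a complete bipartite graph in `G` with
bipartition `(V1, V2)`. -/
def CompBipOn (G : SimpleGraph V) (B V1 V2 : Set V) : Prop :=
  V1.Nonempty ∧ V2.Nonempty ∧ Disjoint V1 V2 ∧ V1 ∪ V2 = B ∧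
    ∀ x ∈ B, ∀ y ∈ B, (G.Adj x y ↔ (x ∈ V1 ∧ y ∈ V2) ∨ (x ∈ V2 ∧ y ∈ V1))

/-- A bi-block graph: a connected graph all of whose blocks are
complete bipartite. -/
def BiBlockGraph (G : SimpleGraph V) : Prop :=
  G.Connected ∧ ∀ B : Set V, IsBlockSet G B → ∃ V1 V2 : Set V, CompBipOn G B V1 V2

/-- The class 𝓑: bi-block graphs with at least two blocks and at most two
cut-vertices in each block. -/
def ClassB (G : SimpleGraph V) : Prop :=
  BiBlockGraph G ∧
  (∃ B1 B2 : Set V, IsBlockSet G B1 ∧ IsBlockSet G B2 ∧ B1 ≠ B2) ∧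
  ∀ B : Set V, IsBlockSet G B → (B ∩ cutSet G).ncard ≤ 2

/-- `S` is an admissible vertex set for the associated tree `T_G`:
it contains all cut-vertices of `G`, both vertices of every `K_{1,1}` block,
exactly one non-cut-vertex from each partite set of every leaf block,
exactly one non-cut-vertex from the cut-vertex-free partite set of every
bridge block whose two cut-vertices share a partite set, and no other
vertices. -/
def AssocSet (G : SimpleGraph V) (S : Set V) : Prop :=
  (∀ v, CutVtx G v → v ∈ S) ∧
  ∀ B V1 V2 : Set V, IsBlockSet G B → CompBipOn G B V1 V2 →
    ((V1.ncard = 1 ∧ V2.ncard = 1) → B ⊆ S) ∧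
    (¬ (V1.ncard = 1 ∧ V2.ncard = 1) →
      (((B ∩ cutSet G).ncard = 1) →
          (S ∩ (V1 \ cutSet G)).ncard = 1 ∧ (S ∩ (V2 \ cutSet G)).ncard = 1) ∧
      (((B ∩ cutSet G).ncard = 2) →
          (((V1 ∩ cutSet G).ncard = 2) →
              (S ∩ (V2 \ cutSet G)).ncard = 1 ∧ S ∩ (V1 \ cutSet G) = ∅) ∧
          (((V2 ∩ cutSet G).ncard = 2) →
              (S ∩ (V1 \ cutSet G)).ncard = 1 ∧ S ∩ (V2 \ cutSet G) = ∅) ∧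
          (((V1 ∩ cutSet G).ncard = 1 ∧ (V2 ∩ cutSet G).ncard = 1) →
              S ∩ (B \ cutSet G) = ∅)))

/-- The eccentricity of a vertex. -/
noncomputable def ecc (G : SimpleGraph V) (v : V) : ℕ := sSup (Set.range (G.dist v))

/-- The diameter of a graph. -/
noncomputable def gdiam (G : SimpleGraph V) : ℕ := sSup (Set.range (ecc G))

/-- The radius of a graph. -/
noncomputable def gradius (G : SimpleGraph V) : ℕ := sInf (Set.range (ecc G))

/-- The center of a graph: vertices of minimum eccentricity. -/
noncomputable def gcenter (G : SimpleGraph V) : Set V := {v | ecc G v = gradius G}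

/-- The eccentricity matrix of `G`. -/
noncomputable def eccMatrix (G : SimpleGraph V) : Matrix V V ℝ := fun u v =>
  if G.dist u v = min (ecc G u) (ecc G v) then (G.dist u v : ℝ) else 0

/-- The spectrum of the eccentricity matrix of `G` is symmetric with respect
to the origin: `μ` is an eigenvalue with multiplicity `l` iff `-μ` is. -/
def SpectrumSymm [Fintype V] [DecidableEq V] (G : SimpleGraph V) : Prop :=
  ∀ (hH : (eccMatrix G).IsHermitian) (μ : ℝ),
    {i | hH.eigenvalues i = μ}.ncard = {i | hH.eigenvalues i = -μ}.ncard

/-- A vertex is diametrically distinguished if it lies on some diametrical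
path and is adjacent to some central vertex. -/
noncomputable def DiamDistinguished (G : SimpleGraph V) (u : V) : Prop :=
  (∃ (a b : V) (p : G.Walk a b), p.IsPath ∧ p.length = G.dist a b ∧
      G.dist a b = gdiam G ∧ u ∈ p.support) ∧
  ∃ z ∈ gcenter G, G.Adj u z

/-!
Distances between vertices of `S` are already realised inside `S`. On a shortest path from
`a ∈ S`, replace a first step to a vertex `u ∉ S` by a step to a vertex of `S` on `u`'s side of
`u`'s block. Because `u` is not a cut vertex, all of its neighbours lie on the other side of that
block, and the new vertex is adjacent to all of them.

It then remains to see that every vertex `v ∉ S` is no farther from `a` than some vertex of `S`.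
Such a `v` is a non-cut vertex of a complete bipartite block `B`. Distances from `a` into `B` are
measured from one base vertex `x ∈ B`: either `a` itself, or the unique cut vertex through which
every walk from `a` enters `B`. Then `d(x, v) ≤ 2`. The choice of `S` gives either a second
vertex of `S` on `v`'s side of `B`, or a cut vertex on the other side. Beyond that cut vertex,
as seen from `a`, there lies a vertex of `S`.
-/

section Reachability

variable {G : SimpleGraph V} {A B C : Set V} {x y z : V}

def ReachableIn (G : SimpleGraph V) (A : Set V) (x y : V) : Prop :=
  ∃ p : G.Walk x y, ∀ t ∈ p.support, t ∈ A

def ConnectedIn (G : SimpleGraph V) (A : Set V) : Prop :=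
  A.Nonempty ∧ ∀ x ∈ A, ∀ y ∈ A, ReachableIn G A x y

def NonsepIn (G : SimpleGraph V) (B : Set V) : Prop :=
  ConnectedIn G B ∧ ∀ w ∈ B, ConnectedIn G (B \ {w})

namespace ReachableIn

lemma right_mem (h : ReachableIn G A x y) : y ∈ A :=
  h.elim fun p hp => hp y p.end_mem_support

lemma refl (hx : x ∈ A) : ReachableIn G A x x :=
  ⟨.nil, by simpa using hx⟩

lemma of_adj (h : G.Adj x y) (hx : x ∈ A) (hy : y ∈ A) : ReachableIn G A x y :=
  ⟨.cons h .nil, by simp [hx, hy]⟩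

lemma symm (h : ReachableIn G A x y) : ReachableIn G A y x :=
  h.elim fun p hp => ⟨p.reverse, by simpa using hp⟩

lemma trans (h : ReachableIn G A x y) (h' : ReachableIn G A y z) : ReachableIn G A x z := by
  obtain ⟨p, hp⟩ := h
  obtain ⟨q, hq⟩ := h'
  exact ⟨p.append q, fun t ht => (Walk.mem_support_append_iff p q).1 ht |>.elim (hp t) (hq t)⟩

lemma mono (hAB : A ⊆ B) (h : ReachableIn G A x y) : ReachableIn G B x y :=
  h.elim fun p hp => ⟨p, fun t ht => hAB (hp t ht)⟩

lemma exists_first_entry (h : ReachableIn G C x z) (hz : z ∈ A) :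
    ∃ y ∈ A, ∃ q : G.Walk x y, (∀ t ∈ q.support, t ∈ C) ∧ ∀ t ∈ q.support, t ∈ A → t = y := by
  obtain ⟨p, hp⟩ := h
  induction p with
  | nil => exact ⟨_, hz, .nil, by simpa using hp, by simp⟩
  | @cons x u _ hxu p ih =>
    by_cases hx : x ∈ A
    · exact ⟨x, hx, .nil, by simpa using hp x (by simp), by simp⟩
    obtain ⟨y, hy, q, hqC, hqA⟩ := ih hz fun t ht => hp t (by simp [ht])
    refine ⟨y, hy, .cons hxu q, ?_, ?_⟩
    · simpa [hp x (by simp)] using hqC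
    · simp only [Walk.support_cons, List.mem_cons, forall_eq_or_imp]
      exact ⟨fun h => absurd h hx, hqA⟩

end ReachableIn

lemma reachableIn_univ_iff : ReachableIn G Set.univ x y ↔ G.Reachable x y :=
  ⟨fun ⟨p, _⟩ => ⟨p⟩, fun ⟨p⟩ => ⟨p, fun _ _ => trivial⟩⟩

lemma reachableIn_induce_iff {T : Set A} {x y : A} :
    ReachableIn (G.induce A) T x y ↔ ReachableIn G (Subtype.val '' T) x y := by
  constructor
  · rintro ⟨p, hp⟩
    refine ⟨p.map (Embedding.induce A).toHom, fun t ht => ?_⟩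
    obtain ⟨t', ht', rfl⟩ := List.mem_map.1 ((Walk.support_map _ _).subst ht :)
    exact ⟨t', hp t' ht', rfl⟩
  · rintro ⟨p, hp⟩
    have hpA : ∀ t ∈ p.support, t ∈ A := fun t ht => by
      obtain ⟨t', -, rfl⟩ := hp t ht
      exact t'.2
    refine ⟨p.induce A hpA, fun t ht => ?_⟩
    obtain ⟨t', ht', he⟩ := hp t (by simpa using ht)
    rwa [← Subtype.ext he]

lemma connectedIn_induce_iff {T : Set A} :
    ConnectedIn (G.induce A) T ↔ ConnectedIn G (Subtype.val '' T) := by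
  simp only [ConnectedIn, Set.image_nonempty, Set.forall_mem_image, reachableIn_induce_iff]

lemma connected_iff_connectedIn_univ {W : Type*} {H : SimpleGraph W} :
    H.Connected ↔ ConnectedIn H Set.univ := by
  simp [connected_iff, Preconnected, ConnectedIn, reachableIn_univ_iff, and_comm,
    Set.nonempty_iff_univ_nonempty]

lemma connected_induce_iff_connectedIn : (G.induce A).Connected ↔ ConnectedIn G A := by
  rw [connected_iff_connectedIn_univ, connectedIn_induce_iff, Set.image_univ, Subtype.range_coe]

lemma noCutVtx_induce_iff : NoCutVtx (G.induce B) ↔ NonsepIn G B := by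
  simp only [NoCutVtx, NonsepIn, connected_induce_iff_connectedIn, connectedIn_induce_iff,
    Set.image_val_compl, Set.image_singleton, Subtype.forall]

lemma cutVtx_iff : CutVtx G x ↔ ¬ ConnectedIn G {x}ᶜ := by
  rw [CutVtx, connected_induce_iff_connectedIn]

lemma ConnectedIn.of_forall_reachableIn (hA : ConnectedIn G A) (hAB : A ⊆ B)
    (h : ∀ x ∈ B, ∃ a ∈ A, ReachableIn G B x a) : ConnectedIn G B := by
  obtain ⟨a₀, ha₀⟩ := hA.1
  have hub : ∀ x ∈ B, ReachableIn G B x a₀ := fun x hx => by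
    obtain ⟨a, ha, hxa⟩ := h x hx
    exact hxa.trans ((hA.2 a ha a₀ ha₀).mono hAB)
  exact ⟨⟨a₀, hAB ha₀⟩, fun x hx y hy => (hub x hx).trans (hub y hy).symm⟩

lemma NonsepIn.connectedIn_diff (hB : NonsepIn G B) (w : V) : ConnectedIn G (B \ {w}) := by
  by_cases hw : w ∈ B
  · exact hB.2 w hw
  · rw [Set.sdiff_singleton_eq_self hw]
    exact hB.1

end Reachability

section Blocks

variable {G : SimpleGraph V} {A B B₁ B₂ C : Set V} {a b c u x y y' z w : V}

lemma SimpleGraph.Walk.reachableIn_support_of_mem {p : G.Walk x y} (hz : z ∈ p.support) :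
    ReachableIn G {t | t ∈ p.support} z y := by
  classical
  exact ⟨p.dropUntil z hz, fun _ ht => p.support_dropUntil_subset_support hz ht⟩

/-- A vertex occurs only once on a path, so `w` cannot cut `z` off from both ends. -/
lemma SimpleGraph.Walk.IsPath.reachableIn_diff_or {p : G.Walk x y} (hp : p.IsPath)
    (hz : z ∈ p.support) (hzw : z ≠ w) :
    ReachableIn G ({t | t ∈ p.support} \ {w}) z x ∨
      ReachableIn G ({t | t ∈ p.support} \ {w}) z y := by
  classical
  have hw : w ∉ (p.takeUntil z hz).support ∨ w ∉ (p.dropUntil z hz).support := by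
    by_contra! h
    have hnd := hp.support_nodup
    rw [← p.take_spec hz, Walk.support_append] at hnd
    have htail : w ∈ (p.dropUntil z hz).support.tail := by
      have h2 := h.2
      rw [← Walk.cons_tail_support] at h2
      rcases List.mem_cons.1 h2 with h' | h'
      · exact absurd h'.symm hzw
      · exact h'
    exact List.disjoint_of_nodup_append hnd h.1 htail
  rcases hw with hw | hw
  · refine .inl ⟨(p.takeUntil z hz).reverse, fun t ht => ?_⟩
    rw [Walk.support_reverse, List.mem_reverse] at ht
    exact ⟨p.support_takeUntil_subset_support hz ht, fun htw => hw (htw ▸ ht)⟩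
  · exact .inr ⟨p.dropUntil z hz, fun t ht =>
      ⟨p.support_dropUntil_subset_support hz ht, fun htw => hw (htw ▸ ht)⟩⟩

lemma SimpleGraph.Walk.notMem_or_notMem_of_mem_edges {p : G.Walk a y}
    (hp : ∀ t ∈ p.support, t ∈ A → t = y) (he : s(u, z) ∈ p.edges) : u ∉ A ∨ z ∉ A := by
  by_contra! h
  exact (p.adj_of_mem_edges he).ne
    ((hp u (p.fst_mem_support_of_mem_edges he) h.1).trans
      (hp z (p.snd_mem_support_of_mem_edges he) h.2).symm)

lemma NonsepIn.union_path (hB : NonsepIn G B) (hy : y ∈ B) (hy' : y' ∈ B) {p : G.Walk y y'}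
    (hp : p.IsPath) : NonsepIn G (B ∪ {t | t ∈ p.support}) := by
  refine ⟨hB.1.of_forall_reachableIn Set.subset_union_left fun x hx => ?_, fun w _ => ?_⟩
  · rcases hx with hx | hx
    · exact ⟨x, hx, .refl (.inl hx)⟩
    · exact ⟨y', hy', (Walk.reachableIn_support_of_mem hx).mono Set.subset_union_right⟩
  · refine (hB.connectedIn_diff w).of_forall_reachableIn
      (Set.sdiff_subset_sdiff_left Set.subset_union_left) fun x hx => ?_
    have hmono := Set.sdiff_subset_sdiff_left (s₁ := {t | t ∈ p.support}) (t := {w})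
      (Set.subset_union_right (s := B))
    rcases hx with ⟨hx | hx, hxw⟩
    · exact ⟨x, ⟨hx, hxw⟩, .refl ⟨.inl hx, hxw⟩⟩
    · rcases hp.reachableIn_diff_or hx (by simpa using hxw) with h | h
      · exact ⟨y, ⟨hy, h.right_mem.2⟩, h.mono hmono⟩
      · exact ⟨y', ⟨hy', h.right_mem.2⟩, h.mono hmono⟩

lemma nonsepIn_pair (h : G.Adj x y) : NonsepIn G {x, y} := by
  have hsingle : ∀ u, ConnectedIn G {u} := fun u =>
    ⟨⟨u, rfl⟩, by rintro _ rfl _ rfl; exact .refl rfl⟩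
  have hxy : ReachableIn G {x, y} x y := .of_adj h (by simp) (by simp)
  refine ⟨⟨⟨x, by simp⟩, ?_⟩, ?_⟩
  · rintro _ (rfl | rfl) _ (rfl | rfl)
    exacts [.refl (by simp), hxy, hxy.symm, .refl (by simp)]
  · rintro _ (rfl | rfl)
    · rw [Set.pair_sdiff_left h.ne]; exact hsingle _
    · rw [Set.pair_sdiff_right h.ne]; exact hsingle _

lemma isBlockSet_iff : IsBlockSet G B ↔ NonsepIn G B ∧ ∀ C, B ⊆ C → NonsepIn G C → B = C := by
  simp only [IsBlockSet, noCutVtx_induce_iff]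

lemma exists_isBlockSet_of_adj [Finite V] (h : G.Adj x y) :
    ∃ B, IsBlockSet G B ∧ x ∈ B ∧ y ∈ B := by
  obtain ⟨B, hsub, hmax⟩ := Finite.exists_le_maximal (p := NonsepIn G) (nonsepIn_pair h)
  exact ⟨B, isBlockSet_iff.2 ⟨hmax.1, fun C hBC hC => le_antisymm hBC (hmax.2 hC hBC)⟩,
    hsub (by simp), hsub (by simp)⟩

lemma dist_eq_add_of_not_reachableIn (hconn : G.Connected) (h : ¬ ReachableIn G {c}ᶜ a b) :
    G.dist a b = G.dist a c + G.dist c b := by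
  classical
  obtain ⟨p, hp⟩ := hconn.exists_walk_length_eq_dist a b
  have hc : c ∈ p.support := by
    by_contra hc
    exact h ⟨p, fun t ht htc => hc (htc ▸ ht)⟩
  refine le_antisymm hconn.dist_triangle ?_
  calc G.dist a c + G.dist c b ≤ (p.takeUntil c hc).length + (p.dropUntil c hc).length :=
        add_le_add (dist_le _) (dist_le _)
    _ = G.dist a b := by rw [← Walk.length_append, p.take_spec hc, hp]

namespace IsBlockSet

lemma nonsepIn (hB : IsBlockSet G B) : NonsepIn G B := (isBlockSet_iff.1 hB).1

lemma eq_of_subset (hB : IsBlockSet G B) (hBC : B ⊆ C) (hC : NonsepIn G C) : B = C :=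
  (isBlockSet_iff.1 hB).2 C hBC hC

lemma support_subset (hB : IsBlockSet G B) (hy : y ∈ B) (hy' : y' ∈ B) {p : G.Walk y y'}
    (hp : p.IsPath) : ∀ t ∈ p.support, t ∈ B := fun _ ht =>
  (hB.eq_of_subset Set.subset_union_left (hB.nonsepIn.union_path hy hy' hp)) ▸ Or.inr ht

/-- Otherwise the two walks close up into an ear through a vertex outside the block, and the block
would not be maximal. -/
lemma eq_of_first_entries (hB : IsBlockSet G B) (hy : y ∈ B) (hy' : y' ∈ B)
    (p : G.Walk a y) (q : G.Walk a y') (hp : ∀ t ∈ p.support, t ∈ B → t = y)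
    (hq : ∀ t ∈ q.support, t ∈ B → t = y') : y = y' := by
  classical
  by_contra hne
  set r := (p.reverse.append q).bypass
  have hr : ¬ r.Nil := Walk.not_nil_of_ne hne
  have hsnd : r.snd ∉ B := by
    have he := (p.reverse.append q).edges_bypass_subset_edges (r.mk_start_snd_mem_edges hr)
    rw [Walk.edges_append, Walk.edges_reverse, List.mem_append, List.mem_reverse] at he
    rcases he with he | he
    · exact (Walk.notMem_or_notMem_of_mem_edges hp he).resolve_left (not_not.2 hy)
    · exact (Walk.notMem_or_notMem_of_mem_edges hq he).resolve_left (not_not.2 hy)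
  exact hsnd (hB.support_subset hy hy' (Walk.bypass_isPath _) _ (r.getVert_mem_support 1))

lemma cutVtx_of_mem_of_mem (h₁ : IsBlockSet G B₁) (h₂ : IsBlockSet G B₂) (hne : B₁ ≠ B₂)
    (hx₁ : x ∈ B₁) (hx₂ : x ∈ B₂) : CutVtx G x := by
  rw [cutVtx_iff]
  intro hconn
  obtain ⟨b, hb₂, hb₁⟩ : ∃ b ∈ B₂, b ∉ B₁ :=
    Set.not_subset.1 fun h => hne (h₂.eq_of_subset h h₁.nonsepIn).symm
  obtain ⟨y₁, hy₁⟩ := (h₁.nonsepIn.2 x hx₁).1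
  obtain ⟨y, hy, p, hpx, hp⟩ :=
    (hconn.2 b (fun h => hb₁ (h ▸ hx₁)) y₁ hy₁.2).exists_first_entry hy₁.1
  have hbx : ReachableIn G (B₂ \ {y}) b x := (h₂.nonsepIn.connectedIn_diff y).2 b
    ⟨hb₂, fun h => hb₁ (h ▸ hy)⟩ x ⟨hx₂, fun h => hpx y p.end_mem_support h.symm⟩
  obtain ⟨y', hy', q, hqy, hq⟩ := hbx.exists_first_entry hx₁
  exact (hqy y' q.end_mem_support).2 (h₁.eq_of_first_entries hy hy' p q hp hq).symm

lemma cutVtx_of_adj_of_notMem [Finite V] (hB : IsBlockSet G B) (hx : x ∈ B) (hy : y ∉ B)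
    (h : G.Adj x y) : CutVtx G x := by
  obtain ⟨B', hB', hxB', hyB'⟩ := exists_isBlockSet_of_adj h
  exact hB.cutVtx_of_mem_of_mem hB' (fun he => hy (he ▸ hyB')) hx hxB'

lemma mem_of_adj_of_not_cutVtx [Finite V] (hB : IsBlockSet G B) (hx : x ∈ B)
    (hcut : ¬ CutVtx G x) (h : G.Adj x y) : y ∈ B :=
  by_contra fun hy => hcut (hB.cutVtx_of_adj_of_notMem hx hy h)

lemma exists_cutVtx [Finite V] (hB : IsBlockSet G B) (hconn : G.Connected) (hu : u ∉ B) :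
    ∃ c ∈ B, CutVtx G c := by
  obtain ⟨x, hx⟩ := hB.nonsepIn.1.1
  obtain ⟨d, -, hd, hd'⟩ := (hconn.preconnected x u).some.exists_boundary_dart B hx hu
  exact ⟨d.fst, hd, hB.cutVtx_of_adj_of_notMem hd hd' d.adj⟩

/-- Every walk from outside a block enters it through the same cut vertex `g`. -/
lemma exists_gate [Finite V] (hB : IsBlockSet G B) (hconn : G.Connected) (ha : a ∉ B) :
    ∃ g ∈ B, CutVtx G g ∧ ∀ x ∈ B, G.dist a x = G.dist a g + G.dist g x := by
  obtain ⟨b, hb⟩ := hB.nonsepIn.1.1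
  obtain ⟨g, hg, p, -, hp⟩ :=
    (reachableIn_univ_iff.2 (hconn.preconnected a b)).exists_first_entry hb
  have hpn : ¬ p.Nil := Walk.not_nil_of_ne fun h => ha (h ▸ hg)
  have hpen : p.penultimate ∉ B := fun h =>
    (p.adj_penultimate hpn).ne (hp _ (p.getVert_mem_support _) h)
  refine ⟨g, hg, hB.cutVtx_of_adj_of_notMem hg hpen (p.adj_penultimate hpn).symm,
    fun x hx => ?_⟩
  by_cases hxg : x = g
  · simp [hxg]
  refine dist_eq_add_of_not_reachableIn hconn fun h => ?_
  obtain ⟨g', hg', q, hqg, hq⟩ := h.exists_first_entry hx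
  exact hqg g' q.end_mem_support (hB.eq_of_first_entries hg hg' p q hp hq).symm

end IsBlockSet

end Blocks

section Distances

variable {G : SimpleGraph V} {S : Set V} {a b c x y : V}

lemma SimpleGraph.Walk.exists_adj_reachableIn_compl (p : G.Walk x c) (hx : x ≠ c) :
    ∃ z, G.Adj z c ∧ ReachableIn G {c}ᶜ x z := by
  induction p with
  | nil => exact absurd rfl hx
  | @cons x u c h p ih =>
    by_cases hu : u = c
    · exact ⟨x, hu ▸ h, .refl hx⟩
    obtain ⟨z, hz, hr⟩ := ih hu
    exact ⟨z, hz, (ReachableIn.of_adj h hx hu).trans hr⟩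

lemma CutVtx.exists_not_reachableIn (hc : CutVtx G c) (hac : a ≠ c) :
    ∃ w, w ≠ c ∧ ¬ ReachableIn G {c}ᶜ a w := by
  by_contra! h
  exact cutVtx_iff.1 hc ⟨⟨a, hac⟩, fun x hx y hy => (h x hx).symm.trans (h y hy)⟩

lemma dist_le_of_neighborSet_subset (hconn : G.Connected)
    (h : G.neighborSet x ⊆ G.neighborSet y) (hb : b ≠ x) : G.dist y b ≤ G.dist x b := by
  obtain ⟨p, hp⟩ := hconn.exists_walk_length_eq_dist x b
  have hpn : ¬ p.Nil := Walk.not_nil_of_ne hb.symm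
  have hadj : G.Adj y p.snd := h (p.adj_snd hpn)
  calc G.dist y b ≤ (p.tail.cons hadj).length := dist_le _
    _ = G.dist x b := by rw [Walk.length_cons, p.length_tail_add_one hpn, hp]

lemma exists_walk_induce_length_le
    (hstep : ∀ a ∈ S, ∀ b ∈ S, a ≠ b → ∃ s ∈ S, G.Adj a s ∧ G.dist s b < G.dist a b)
    (ha : a ∈ S) (hb : b ∈ S) : ∃ p : (G.induce S).Walk ⟨a, ha⟩ ⟨b, hb⟩, p.length ≤ G.dist a b := by
  induction hn : G.dist a b using Nat.strong_induction_on generalizing a with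
  | _ n ih =>
    by_cases hab : a = b
    · subst hab
      exact ⟨.nil, by simp⟩
    obtain ⟨s, hs, has, hsb⟩ := hstep a ha b hb hab
    obtain ⟨q, hq⟩ := ih _ (hn ▸ hsb) hs rfl
    have has' : (G.induce S).Adj ⟨a, ha⟩ ⟨s, hs⟩ := has
    exact ⟨q.cons has', by rw [Walk.length_cons]; omega⟩

lemma dist_induce_eq
    (hstep : ∀ a ∈ S, ∀ b ∈ S, a ≠ b → ∃ s ∈ S, G.Adj a s ∧ G.dist s b < G.dist a b)
    (ha : a ∈ S) (hb : b ∈ S) : (G.induce S).dist ⟨a, ha⟩ ⟨b, hb⟩ = G.dist a b := by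
  obtain ⟨p, hp⟩ := exists_walk_induce_length_le hstep ha hb
  obtain ⟨q, hq⟩ := p.reachable.exists_walk_length_eq_dist
  refine le_antisymm ((dist_le p).trans hp) ?_
  calc G.dist a b ≤ (q.map (Embedding.induce S).toHom).length := dist_le _
    _ = _ := by rw [Walk.length_map, hq]

lemma ecc_eq_ecc_induce [Finite V] (ha : a ∈ S)
    (hdist : ∀ b (hb : b ∈ S), (G.induce S).dist ⟨a, ha⟩ ⟨b, hb⟩ = G.dist a b)
    (hfar : ∀ v, ∃ s ∈ S, G.dist a v ≤ G.dist a s) : ecc G a = ecc (G.induce S) ⟨a, ha⟩ := by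
  have : Nonempty V := ⟨a⟩
  have : Nonempty S := ⟨⟨a, ha⟩⟩
  refine le_antisymm (csSup_le (Set.range_nonempty _) ?_) (csSup_le (Set.range_nonempty _) ?_)
  · rintro _ ⟨v, rfl⟩
    obtain ⟨s, hs, hvs⟩ := hfar v
    exact hvs.trans (hdist s hs ▸ le_csSup (Set.finite_range _).bddAbove ⟨⟨s, hs⟩, rfl⟩)
  · rintro _ ⟨⟨b, hb⟩, rfl⟩
    exact hdist b hb ▸ le_csSup (Set.finite_range _).bddAbove ⟨b, rfl⟩

end Distances

namespace CompBipOn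

variable {G : SimpleGraph V} {B V₁ V₂ : Set V} {x y : V}

lemma symm (h : CompBipOn G B V₁ V₂) : CompBipOn G B V₂ V₁ := by
  obtain ⟨h₁, h₂, h₃, h₄, h₅⟩ := h
  exact ⟨h₂, h₁, h₃.symm, Set.union_comm V₂ V₁ ▸ h₄, fun x hx y hy => (h₅ x hx y hy).trans or_comm⟩

lemma mem_left (h : CompBipOn G B V₁ V₂) (hx : x ∈ V₁) : x ∈ B := h.2.2.2.1 ▸ Or.inl hx

lemma mem_right (h : CompBipOn G B V₁ V₂) (hx : x ∈ V₂) : x ∈ B := h.symm.mem_left hx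

lemma mem_or_mem (h : CompBipOn G B V₁ V₂) (hx : x ∈ B) : x ∈ V₁ ∨ x ∈ V₂ := by
  rwa [← h.2.2.2.1] at hx

lemma ne (h : CompBipOn G B V₁ V₂) (hx : x ∈ V₁) (hy : y ∈ V₂) : x ≠ y :=
  fun hxy => h.2.2.1.ne_of_mem hx hy hxy

lemma adj (h : CompBipOn G B V₁ V₂) (hx : x ∈ V₁) (hy : y ∈ V₂) : G.Adj x y :=
  (h.2.2.2.2 x (h.mem_left hx) y (h.mem_right hy)).2 (.inl ⟨hx, hy⟩)

lemma mem_right_of_adj (h : CompBipOn G B V₁ V₂) (hx : x ∈ V₁) (hy : y ∈ B) (hxy : G.Adj x y) :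
    y ∈ V₂ := by
  rcases (h.2.2.2.2 x (h.mem_left hx) y hy).1 hxy with ⟨-, hy⟩ | ⟨hx', -⟩
  exacts [hy, absurd rfl (h.ne hx hx')]

lemma not_adj_left (h : CompBipOn G B V₁ V₂) (hx : x ∈ V₁) (hy : y ∈ V₁) : ¬ G.Adj x y :=
  fun hxy => h.ne hy (h.mem_right_of_adj hx (h.mem_left hy) hxy) rfl

lemma dist_le_two (h : CompBipOn G B V₁ V₂) (hx : x ∈ V₁) (hy : y ∈ V₁) : G.dist x y ≤ 2 := by
  obtain ⟨z, hz⟩ := h.2.1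
  exact dist_le ((Walk.nil.cons (h.adj hy hz).symm).cons (h.adj hx hz))

lemma ncard_inter_eq_add [Finite V] (h : CompBipOn G B V₁ V₂) (T : Set V) :
    (B ∩ T).ncard = (V₁ ∩ T).ncard + (V₂ ∩ T).ncard := by
  rw [← h.2.2.2.1, Set.union_inter_distrib_right]
  exact Set.ncard_union_eq (h.2.2.1.mono Set.inter_subset_left Set.inter_subset_left)

end CompBipOn

lemma BiBlockGraph.exists_compBipOn_mem_left {G : SimpleGraph V} {B : Set V} {x : V}
    (hG : BiBlockGraph G) (hB : IsBlockSet G B) (hx : x ∈ B) :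
    ∃ V₁ V₂, CompBipOn G B V₁ V₂ ∧ x ∈ V₁ := by
  obtain ⟨V₁, V₂, h⟩ := hG.2 B hB
  exact (h.mem_or_mem hx).elim (fun hx => ⟨V₁, V₂, h, hx⟩) fun hx => ⟨V₂, V₁, h.symm, hx⟩

namespace ClassB

variable {G : SimpleGraph V} {S B V₁ V₂ : Set V} {a c v x : V}

lemma exists_cutVtx_mem [Finite V] (hG : ClassB G) (hB : IsBlockSet G B) :
    ∃ c ∈ B, CutVtx G c := by
  obtain ⟨B₁, B₂, h₁, h₂, hne⟩ := hG.2.1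
  obtain ⟨u, hu⟩ : ∃ u, u ∉ B := by
    by_contra! h
    have hB_eq : ∀ {C}, IsBlockSet G C → C = B := fun hC =>
      hC.eq_of_subset (fun t _ => h t) hB.nonsepIn
    exact hne (hB_eq h₁ ▸ (hB_eq h₂).symm)
  exact hB.exists_cutVtx hG.1.1 hu

lemma ncard_cut_eq_one_or_two [Finite V] (hG : ClassB G) (hB : IsBlockSet G B) :
    (B ∩ cutSet G).ncard = 1 ∨ (B ∩ cutSet G).ncard = 2 := by
  obtain ⟨c, hc⟩ := hG.exists_cutVtx_mem hB
  have : 0 < (B ∩ cutSet G).ncard := (Set.ncard_pos (Set.toFinite _)).2 ⟨c, hc⟩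
  have := hG.2.2 B hB
  omega

lemma inter_nonempty_left [Finite V] (hG : ClassB G) (hS : AssocSet G S) (hB : IsBlockSet G B)
    (hcb : CompBipOn G B V₁ V₂) : (S ∩ V₁).Nonempty := by
  by_cases hk : V₁.ncard = 1 ∧ V₂.ncard = 1
  · obtain ⟨x, hx⟩ := hcb.1
    exact ⟨x, (hS.2 B V₁ V₂ hB hcb).1 hk (hcb.mem_left hx), hx⟩
  by_cases hc : ∃ c ∈ V₁, CutVtx G c
  · obtain ⟨c, hc, hcut⟩ := hc
    exact ⟨c, hS.1 c hcut, hc⟩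
  have h₀ : (V₁ ∩ cutSet G).ncard = 0 := by
    rw [Set.ncard_eq_zero]
    exact Set.eq_empty_iff_forall_notMem.2 fun c hc' => hc ⟨c, hc'⟩
  obtain ⟨h₁, h₂⟩ := (hS.2 B V₁ V₂ hB hcb).2 hk
  have := hcb.ncard_inter_eq_add (cutSet G)
  suffices (S ∩ (V₁ \ cutSet G)).ncard = 1 by
    obtain ⟨t, hts, htV, -⟩ := Set.nonempty_of_ncard_ne_zero (this ▸ one_ne_zero)
    exact ⟨t, hts, htV⟩
  rcases hG.ncard_cut_eq_one_or_two hB with h | h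
  · exact (h₁ h).1
  · exact ((h₂ h).2.1 (by omega)).1

lemma exists_mem_ne_or_cutVtx [Finite V] (hG : ClassB G) (hS : AssocSet G S)
    (hB : IsBlockSet G B) (hcb : CompBipOn G B V₁ V₂) (hk : ¬ (V₁.ncard = 1 ∧ V₂.ncard = 1))
    (hx : x ∈ V₁) : (∃ s ∈ S ∩ V₁, s ≠ x) ∨ ∃ c ∈ V₂, CutVtx G c := by
  by_contra! h
  obtain ⟨hS₁, hV₂⟩ := h
  have hcut_eq : ∀ c ∈ B, CutVtx G c → c = x := fun c hc hcut =>
    hS₁ c ⟨hS.1 c hcut, (hcb.mem_or_mem hc).resolve_right fun h => hV₂ c h hcut⟩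
  obtain ⟨c, hcB, hc⟩ := hG.exists_cutVtx_mem hB
  have hxc : CutVtx G x := hcut_eq c hcB hc ▸ hc
  have h₁ : (B ∩ cutSet G).ncard = 1 := Set.ncard_eq_one.2
    ⟨x, Set.eq_singleton_iff_unique_mem.2 ⟨⟨hcb.mem_left hx, hxc⟩, fun c hc => hcut_eq c hc.1 hc.2⟩⟩
  obtain ⟨s, hsS, hsV, hscut⟩ :=
    Set.nonempty_of_ncard_ne_zero ((((hS.2 B V₁ V₂ hB hcb).2 hk).1 h₁).1 ▸ one_ne_zero)
  exact hscut (hS₁ s ⟨hsS, hsV⟩ ▸ hxc)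

lemma exists_mem_inter_ne [Finite V] (hG : ClassB G) (hS : AssocSet G S) (hB : IsBlockSet G B)
    (c : V) : ∃ s ∈ S ∩ B, s ≠ c := by
  obtain ⟨V₁, V₂, hcb⟩ := hG.1.2 B hB
  obtain ⟨s₁, hs₁S, hs₁⟩ := hG.inter_nonempty_left hS hB hcb
  obtain ⟨s₂, hs₂S, hs₂⟩ := hG.inter_nonempty_left hS hB hcb.symm
  by_cases h : s₁ = c
  · exact ⟨s₂, ⟨hs₂S, hcb.mem_right hs₂⟩, h ▸ (hcb.ne hs₁ hs₂).symm⟩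
  · exact ⟨s₁, ⟨hs₁S, hcb.mem_left hs₁⟩, h⟩

/-- The side of `c` away from `a` contains a block through `c`, and that block meets `S` outside
`c`. -/
lemma exists_mem_dist_gt [Finite V] (hG : ClassB G) (hS : AssocSet G S) (hc : CutVtx G c)
    (hac : a ≠ c) : ∃ s ∈ S, G.dist a c < G.dist a s := by
  have hconn : G.Connected := hG.1.1
  obtain ⟨w, hwc, hw⟩ := hc.exists_not_reachableIn hac
  obtain ⟨z, hzc, hwz⟩ := (hconn.preconnected w c).some.exists_adj_reachableIn_compl hwc
  obtain ⟨B, hB, hzB, hcB⟩ := exists_isBlockSet_of_adj hzc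
  obtain ⟨s, ⟨hsS, hsB⟩, hsc⟩ := hG.exists_mem_inter_ne hS hB c
  have hzs : ReachableIn G {c}ᶜ z s :=
    ((hB.nonsepIn.2 c hcB).2 z ⟨hzB, hzc.ne⟩ s ⟨hsB, hsc⟩).mono fun _ ht => ht.2
  have hsplit := dist_eq_add_of_not_reachableIn hconn fun has => hw (has.trans (hwz.trans hzs).symm)
  have := hconn.pos_dist_of_ne hsc.symm
  exact ⟨s, hsS, by omega⟩

lemma exists_adj_mem_dist_lt [Finite V] (hG : ClassB G) (hS : AssocSet G S) {b : V}
    (hb : b ∈ S) (hab : a ≠ b) : ∃ s ∈ S, G.Adj a s ∧ G.dist s b < G.dist a b := by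
  have hconn : G.Connected := hG.1.1
  obtain ⟨p, hp⟩ := hconn.exists_walk_length_eq_dist a b
  have hpn : ¬ p.Nil := Walk.not_nil_of_ne hab
  have hax : G.Adj a p.snd := p.adj_snd hpn
  have hxb : G.dist p.snd b < G.dist a b := by
    have := dist_le p.tail
    have := p.length_tail_add_one hpn
    omega
  by_cases hxS : p.snd ∈ S
  · exact ⟨p.snd, hxS, hax, hxb⟩
  obtain ⟨B, hB, hxB, haB⟩ := exists_isBlockSet_of_adj hax.symm
  obtain ⟨V₁, V₂, hcb, hx⟩ := hG.1.exists_compBipOn_mem_left hB hxB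
  obtain ⟨s, hsS, hs⟩ := hG.inter_nonempty_left hS hB hcb
  have hN : G.neighborSet p.snd ⊆ G.neighborSet s := fun y hy => hcb.adj hs
    (hcb.mem_right_of_adj hx (hB.mem_of_adj_of_not_cutVtx hxB (fun h => hxS (hS.1 _ h)) hy) hy)
  refine ⟨s, hsS, (hcb.adj hs (hcb.mem_right_of_adj hx haB hax.symm)).symm, ?_⟩
  exact (dist_le_of_neighborSet_subset hconn hN fun h => hxS (h ▸ hb)).trans_lt hxb

/-- Distances from `a` into `B` are measured from a base vertex `x` of `B`: `a` itself, or the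
gate of `B` seen from `a`. -/
lemma exists_mem_dist_le_of_mem_left [Finite V] (hG : ClassB G) (hS : AssocSet G S)
    (hB : IsBlockSet G B) (hcb : CompBipOn G B V₁ V₂) (ha : a ∈ S) (hv : v ∈ V₁) (hvS : v ∉ S) :
    ∃ s ∈ S, G.dist a v ≤ G.dist a s := by
  have hconn : G.Connected := hG.1.1
  have hk : ¬ (V₁.ncard = 1 ∧ V₂.ncard = 1) := fun hk =>
    hvS ((hS.2 B V₁ V₂ hB hcb).1 hk (hcb.mem_left hv))
  obtain ⟨x, hxB, hxa, hdist⟩ : ∃ x ∈ B, (x = a ∨ a ∉ B ∧ CutVtx G x) ∧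
      ∀ y ∈ B, G.dist a y = G.dist a x + G.dist x y := by
    by_cases haB : a ∈ B
    · exact ⟨a, haB, .inl rfl, fun y _ => by simp⟩
    · obtain ⟨g, hg, hgcut, hgd⟩ := hB.exists_gate hconn haB
      exact ⟨g, hg, .inr ⟨haB, hgcut⟩, hgd⟩
  rw [hdist v (hcb.mem_left hv)]
  rcases hcb.mem_or_mem hxB with hx | hx
  · have hxv := hcb.dist_le_two hx hv
    rcases hG.exists_mem_ne_or_cutVtx hS hB hcb hk hx with ⟨s, ⟨hsS, hs⟩, hsx⟩ | ⟨c, hc, hcut⟩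
    · have := hconn.one_lt_dist_of_ne_of_not_adj hsx.symm (hcb.not_adj_left hx hs)
      exact ⟨s, hsS, by rw [hdist s (hcb.mem_left hs)]; omega⟩
    · have hac : a ≠ c := by
        rintro rfl
        rcases hxa with rfl | ⟨haB, -⟩
        exacts [hcb.ne hx hc rfl, haB (hcb.mem_right hc)]
      obtain ⟨s, hsS, hs⟩ := hG.exists_mem_dist_gt hS hcut hac
      rw [hdist c (hcb.mem_right hc), dist_eq_one_iff_adj.2 (hcb.adj hx hc)] at hs
      exact ⟨s, hsS, by omega⟩
  · rw [dist_eq_one_iff_adj.2 (hcb.adj hv hx).symm]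
    rcases hxa with rfl | ⟨haB, hxcut⟩
    · obtain ⟨s, ⟨hsS, -⟩, hsx⟩ := hG.exists_mem_inter_ne hS hB x
      have := hconn.pos_dist_of_ne hsx.symm
      exact ⟨s, hsS, by rw [dist_self]; omega⟩
    · exact hG.exists_mem_dist_gt hS hxcut fun h => haB (h ▸ hxB)

lemma exists_mem_dist_le [Finite V] (hG : ClassB G) (hS : AssocSet G S) (ha : a ∈ S) (v : V) :
    ∃ s ∈ S, G.dist a v ≤ G.dist a s := by
  by_cases hvS : v ∈ S
  · exact ⟨v, hvS, le_rfl⟩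
  have hva : v ≠ a := fun h => hvS (h ▸ ha)
  obtain ⟨B, hB, hvB, -⟩ :=
    exists_isBlockSet_of_adj ((hG.1.1.preconnected v a).some.adj_snd (Walk.not_nil_of_ne hva))
  obtain ⟨V₁, V₂, hcb, hv⟩ := hG.1.exists_compBipOn_mem_left hB hvB
  exact hG.exists_mem_dist_le_of_mem_left hS hB hcb ha hv hvS

end ClassB

theorem stmt_6 {V : Type*} [Fintype V] (G : SimpleGraph V) (hG : ClassB G)
    (S : Set V) (hS : AssocSet G S) :
    ∀ a : S, ecc G a.1 = ecc (G.induce S) a := by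
  rintro ⟨a, ha⟩
  refine ecc_eq_ecc_induce ha (fun b hb => dist_induce_eq ?_ ha hb) (hG.exists_mem_dist_le hS ha)
  exact fun a _ b hb hab => hG.exists_adj_mem_dist_lt hS hb hab
end

section
/- Let G be in class B with diam(G) ≥ 4, and let x be a vertex lying in partite set V1(B0) of a block B0. If x is a central vertex of G but not a cut-vertex of G, then B0 is a bridge block and both cut-vertices of G in B0 lie in V2(B0). -/
/-! Every vertex outside the block `B0` is reached from `B0` through one of its (at most two)
cut-vertices, and `B0` has diameter at most 2. If `ecc x ≥ 3`, a vertex of `B0` strictly closer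
than `x` to every cut-vertex of `B0` would have smaller eccentricity than the central vertex `x`;
such a vertex exists when `B0` has a single cut-vertex (that vertex) or a cut-vertex in `V1`
(a suitable vertex of `V2`). If `ecc x ≤ 2`, every vertex outside `B0` hangs on a cut-vertex
adjacent to `x`, hence in `V2`, and the ends of a diametral path, of length at least 4, hang on
two different ones. -/

open SimpleGraph

variable {V : Type*}

lemma noCutVtx_induce_iff_s9 {G : SimpleGraph V} {s : Set V} :
    NoCutVtx (G.induce s) ↔
      (G.induce s).Connected ∧ ∀ w ∈ s, (G.induce (s \ {w})).Connected := by
  have iso (w : s) : (G.induce s).induce {w}ᶜ ≃g G.induce (s \ {(w : V)}) :=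
    { toFun := fun z => ⟨z.1.1, z.1.2, fun h => z.2 (Subtype.ext h)⟩
      invFun := fun z => ⟨⟨z.1, z.2.1⟩, fun h => z.2.2 (congrArg Subtype.val h)⟩
      left_inv := fun _ => rfl
      right_inv := fun _ => rfl
      map_rel_iff' := Iff.rfl }
  refine and_congr_right fun _ => ⟨fun h w hw => ?_, fun h w => ?_⟩
  · exact (iso ⟨w, hw⟩).connected_iff.mp (h ⟨w, hw⟩)
  · exact (iso w).connected_iff.mpr (h w w.2)

namespace SimpleGraph.Walk

lemma IsPath.notMem_support_takeUntil_or_dropUntil [DecidableEq V] {G : SimpleGraph V}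
    {a b y w : V} {p : G.Walk a b} (hp : p.IsPath) (hy : y ∈ p.support) (hwy : w ≠ y) :
    w ∉ (p.takeUntil y hy).support ∨ w ∉ (p.dropUntil y hy).support := by
  by_contra! h
  have hnodup := hp.support_nodup
  rw [← p.take_spec hy, support_append, List.nodup_append] at hnodup
  have htail : w ∈ (p.dropUntil y hy).support.tail := by
    have := h.2
    rw [← cons_tail_support] at this
    exact (List.mem_cons.mp this).resolve_left hwy
  exact hnodup.2.2 w h.1 w htail rfl

end SimpleGraph.Walk

lemma noCutVtx_induce_union_support {G : SimpleGraph V} {s : Set V}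
    (hs : NoCutVtx (G.induce s)) {a b : V} {p : G.Walk a b} (hp : p.IsPath)
    (ha : a ∈ s) (hb : b ∈ s) : NoCutVtx (G.induce (s ∪ {y | y ∈ p.support})) := by
  classical
  rw [noCutVtx_induce_iff_s9] at hs ⊢
  obtain ⟨hconn, hdel⟩ := hs
  refine ⟨induce_union_connected hconn.preconnected p.connected_induce_support.preconnected
    ⟨a, ha, p.start_mem_support⟩, fun w _ => ?_⟩
  have hsw : (G.induce (s \ {w})).Connected := by
    by_cases hw : w ∈ s
    · exact hdel w hw
    · rwa [Set.sdiff_singleton_eq_self hw]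
  -- split the path at `y`: `w` lies on at most one of the two sides
  have hexit : ∀ y ∈ p.support, y ≠ w → ∃ c ∈ s \ {w}, ∃ q : G.Walk y c,
      w ∉ q.support ∧ ∀ z ∈ q.support, z ∈ p.support := by
    intro y hy hyw
    rcases hp.notMem_support_takeUntil_or_dropUntil hy (Ne.symm hyw) with h | h
    · refine ⟨a, ⟨ha, ?_⟩, (p.takeUntil y hy).reverse, by simpa using h, fun z hz => ?_⟩
      · rintro rfl; exact h (p.takeUntil y hy).start_mem_support
      · exact p.support_takeUntil_subset_support hy (by simpa using hz)
    · refine ⟨b, ⟨hb, ?_⟩, p.dropUntil y hy, h, fun z hz => ?_⟩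
      · rintro rfl; exact h (p.dropUntil y hy).end_mem_support
      · exact p.support_dropUntil_subset_support hy hz
  obtain ⟨⟨r, hr⟩⟩ := hsw.nonempty
  refine induce_connected_of_patches r ⟨Or.inl hr.1, hr.2⟩ fun {y} hy => ?_
  obtain ⟨hy | hy, hyw⟩ := hy
  · exact ⟨s \ {w}, fun z hz => ⟨Or.inl hz.1, hz.2⟩, hr, ⟨hy, hyw⟩,
      hsw.preconnected _ _⟩
  obtain ⟨c, hc, q, hwq, hqp⟩ := hexit y hy hyw
  refine ⟨s \ {w} ∪ {z | z ∈ q.support}, ?_, Or.inl hr, Or.inr q.start_mem_support,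
    (induce_union_connected hsw.preconnected q.connected_induce_support.preconnected
      ⟨c, hc, q.end_mem_support⟩).preconnected _ _⟩
  rintro z (hz | hz)
  · exact ⟨Or.inl hz.1, hz.2⟩
  · exact ⟨Or.inr (hqp z hz), fun h => hwq (h ▸ hz)⟩

-- Otherwise a path from `v` back to the block avoiding `u` would enlarge the block.
lemma IsBlockSet.cutVtx_of_adj {G : SimpleGraph V} {B : Set V} (hB : IsBlockSet G B)
    {u v : V} (hu : u ∈ B) (hv : v ∉ B) (huv : G.Adj u v) : CutVtx G u := by
  classical
  intro hconn
  obtain ⟨⟨b, hbB, hbu⟩⟩ := ((noCutVtx_induce_iff_s9.mp hB.1).2 u hu).nonempty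
  have hvu : v ∈ ({u}ᶜ : Set V) := by rintro rfl; exact hv hu
  obtain ⟨q'⟩ := hconn.preconnected ⟨v, hvu⟩ ⟨b, hbu⟩
  let q : G.Walk v b := q'.map (Embedding.induce _).toHom
  have hq : u ∉ q.support := by
    intro h
    obtain ⟨z, -, hz⟩ := List.mem_map.mp ((q'.support_map _).subst h :)
    exact z.2 hz
  have hp : (q.bypass.cons huv).IsPath :=
    q.bypass_isPath.cons fun h => hq (q.support_bypass_subset_support h)
  have hBeq := hB.2 _ Set.subset_union_left (noCutVtx_induce_union_support hB.1 hp hu hbB)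
  exact hv (hBeq ▸ Or.inr (by simp))

lemma IsBlockSet.exists_cutVtx_dist_add_le {G : SimpleGraph V} {B : Set V}
    (hconn : G.Connected) (hB : IsBlockSet G B) {z w : V} (hz : z ∈ B) (hw : w ∉ B) :
    ∃ k ∈ B ∩ cutSet G, G.dist z k + G.dist k w ≤ G.dist z w := by
  classical
  obtain ⟨p, hp⟩ := (hconn.preconnected z w).exists_walk_length_eq_dist
  obtain ⟨d, hd, hd1, hd2⟩ := p.exists_boundary_dart B hz hw
  have hk := p.dart_fst_mem_support_of_mem_darts hd
  refine ⟨d.fst, ⟨hd1, hB.cutVtx_of_adj hd1 hd2 d.adj⟩, ?_⟩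
  calc G.dist z d.fst + G.dist d.fst w
      ≤ (p.takeUntil _ hk).length + (p.dropUntil _ hk).length :=
        add_le_add (dist_le _) (dist_le _)
    _ = G.dist z w := by rw [← Walk.length_append, Walk.take_spec, hp]

lemma IsBlockSet.ne_univ {G : SimpleGraph V} {B B1 B2 : Set V} (hB : IsBlockSet G B)
    (hB1 : IsBlockSet G B1) (hB2 : IsBlockSet G B2) (h12 : B1 ≠ B2) : B ≠ Set.univ := by
  rintro rfl
  exact h12 ((hB1.2 _ (Set.subset_univ _) hB.1).trans (hB2.2 _ (Set.subset_univ _) hB.1).symm)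

section Eccentricity

variable [Finite V] (G : SimpleGraph V)

lemma dist_le_ecc (z w : V) : G.dist z w ≤ ecc G z :=
  le_csSup (Set.finite_range _).bddAbove ⟨w, rfl⟩

lemma exists_dist_eq_ecc [Nonempty V] (z : V) : ∃ w, G.dist z w = ecc G z :=
  (Set.range_nonempty (G.dist z)).csSup_mem (Set.finite_range _)

lemma exists_ecc_eq_gdiam [Nonempty V] : ∃ a, ecc G a = gdiam G :=
  (Set.range_nonempty (ecc G)).csSup_mem (Set.finite_range _)

end Eccentricity

lemma gradius_le_ecc (G : SimpleGraph V) (z : V) : gradius G ≤ ecc G z :=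
  csInf_le (OrderBot.bddBelow _) ⟨z, rfl⟩

namespace CompBipOn

variable {G : SimpleGraph V} {B V1 V2 : Set V}

lemma left_subset (h : CompBipOn G B V1 V2) : V1 ⊆ B := h.2.2.2.1 ▸ Set.subset_union_left

lemma right_subset (h : CompBipOn G B V1 V2) : V2 ⊆ B := h.2.2.2.1 ▸ Set.subset_union_right

lemma mem_or_mem_s9 (h : CompBipOn G B V1 V2) {b : V} (hb : b ∈ B) : b ∈ V1 ∨ b ∈ V2 := by
  rwa [← h.2.2.2.1] at hb

lemma adj_s9 (h : CompBipOn G B V1 V2) {a b : V} (ha : a ∈ V1) (hb : b ∈ V2) : G.Adj a b :=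
  (h.2.2.2.2 a (h.left_subset ha) b (h.right_subset hb)).mpr (Or.inl ⟨ha, hb⟩)

lemma mem_right_of_adj_s9 (h : CompBipOn G B V1 V2) {a b : V} (ha : a ∈ V1) (hb : b ∈ B)
    (hab : G.Adj a b) : b ∈ V2 := by
  rcases (h.2.2.2.2 a (h.left_subset ha) b hb).mp hab with ⟨-, hb2⟩ | ⟨ha2, -⟩
  · exact hb2
  · exact absurd ha2 (Set.disjoint_left.mp h.2.2.1 ha)

lemma dist_le_two_s9 (h : CompBipOn G B V1 V2) {a b : V} (ha : a ∈ B) (hb : b ∈ B) :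
    G.dist a b ≤ 2 := by
  obtain ⟨v1, hv1⟩ := h.1
  obtain ⟨v2, hv2⟩ := h.2.1
  rw [← h.2.2.2.1] at ha hb
  rcases ha with ha | ha <;> rcases hb with hb | hb
  · simpa using dist_le ((Walk.nil.cons (h.adj_s9 hb hv2).symm).cons (h.adj_s9 ha hv2))
  · exact (dist_le (Walk.nil.cons (h.adj_s9 ha hb))).trans (by simp)
  · exact (dist_le (Walk.nil.cons (h.adj_s9 hb ha).symm)).trans (by simp)
  · simpa using dist_le ((Walk.nil.cons (h.adj_s9 hv1 hb)).cons (h.adj_s9 hv1 ha).symm)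

lemma dist_lt_of_mem_left (h : CompBipOn G B V1 V2) {x k z : V} (hx : x ∈ V1) (hk : k ∈ V1)
    (hkx : k ≠ x) (hz : z ∈ V2) : G.dist z k < G.dist x k := by
  have hreach : G.Reachable x k := (h.adj_s9 hx hz).reachable.trans (h.adj_s9 hk hz).symm.reachable
  have hpos := hreach.pos_dist_of_ne hkx.symm
  have hne : G.dist x k ≠ 1 := fun h1 => Set.disjoint_left.mp h.2.2.1 hk
    (h.mem_right_of_adj_s9 hx (h.left_subset hk) (dist_eq_one_iff_adj.mp h1))
  rw [dist_eq_one_iff_adj.mpr (h.adj_s9 hk hz).symm]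
  omega

end CompBipOn

lemma Set.eq_pair_of_ncard_le_two {α : Type*} [Finite α] {s : Set α} {a b : α} (ha : a ∈ s)
    (hb : b ∈ s) (hab : a ≠ b) (hs : s.ncard ≤ 2) : s = {a, b} :=
  (Set.eq_of_subset_of_ncard_le (Set.pair_subset ha hb) (by rwa [Set.ncard_pair hab])).symm

section CentralVertex

variable [Finite V] {G : SimpleGraph V} {B V1 V2 : Set V}

lemma IsBlockSet.ecc_lt_of_dist_lt (hconn : G.Connected) (hB : IsBlockSet G B)
    (hbip : CompBipOn G B V1 V2) {x z : V} (hx : x ∈ B) (hz : z ∈ B) (h3 : 3 ≤ ecc G x)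
    (hcloser : ∀ k ∈ B ∩ cutSet G, G.dist z k < G.dist x k) : ecc G z < ecc G x := by
  have : Nonempty V := ⟨x⟩
  obtain ⟨w, hw⟩ := exists_dist_eq_ecc G z
  rw [← hw]
  by_cases hwB : w ∈ B
  · have := hbip.dist_le_two_s9 hz hwB
    omega
  obtain ⟨k, hk, hkw⟩ := hB.exists_cutVtx_dist_add_le hconn hx hwB
  calc G.dist z w ≤ G.dist z k + G.dist k w := hconn.dist_triangle
    _ < G.dist x k + G.dist k w := by have := hcloser k hk; omega
    _ ≤ G.dist x w := hkw
    _ ≤ ecc G x := dist_le_ecc G x w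

lemma IsBlockSet.exists_dist_le_of_mem_gcenter (hconn : G.Connected) (hB : IsBlockSet G B)
    (hbip : CompBipOn G B V1 V2) {x z : V} (hx : x ∈ B) (hxc : x ∈ gcenter G)
    (h3 : 3 ≤ ecc G x) (hz : z ∈ B) : ∃ k ∈ B ∩ cutSet G, G.dist x k ≤ G.dist z k := by
  by_contra! hcloser
  have hlt := hB.ecc_lt_of_dist_lt hconn hbip hx hz h3 hcloser
  have hle := gradius_le_ecc G z
  rw [show ecc G x = gradius G from hxc] at hlt
  omega

lemma IsBlockSet.notMem_left_of_eq_pair (hconn : G.Connected) (hB : IsBlockSet G B)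
    (hbip : CompBipOn G B V1 V2) {x : V} (hx : x ∈ V1) (hxK : ¬ CutVtx G x)
    (hxc : x ∈ gcenter G) (h3 : 3 ≤ ecc G x) {d d' : V} (hK : B ∩ cutSet G = {d, d'}) :
    d ∉ V1 := by
  intro hd
  -- some `z ∈ V2` (the cut-vertex `d'`, when it is in `V2`) is strictly closer than `x`
  -- to both cut-vertices
  have hclose : ∀ z ∈ V2, (d' ∈ V2 → z = d') →
      ∀ k ∈ B ∩ cutSet G, G.dist z k < G.dist x k := by
    intro z hz hzd' k hk
    have hkx : k ≠ x := fun h => hxK (h ▸ hk.2)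
    rcases hbip.mem_or_mem_s9 hk.1 with hk1 | hk2
    · exact hbip.dist_lt_of_mem_left hx hk1 hkx hz
    · have hkd' : k = d' := by
        rw [hK] at hk
        exact hk.resolve_left fun h => Set.disjoint_left.mp hbip.2.2.1 hd (h ▸ hk2)
      rw [← hkd'] at hzd'
      rw [hzd' hk2, dist_self]
      exact (hconn.preconnected x k).pos_dist_of_ne hkx.symm
  obtain ⟨z, hz, hzd'⟩ : ∃ z ∈ V2, d' ∈ V2 → z = d' := by
    by_cases hd' : d' ∈ V2
    · exact ⟨d', hd', fun _ => rfl⟩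
    · obtain ⟨z, hz⟩ := hbip.2.1
      exact ⟨z, hz, fun h => absurd h hd'⟩
  obtain ⟨k, hk, hle⟩ :=
    hB.exists_dist_le_of_mem_gcenter hconn hbip (hbip.left_subset hx) hxc h3 (hbip.right_subset hz)
  exact (hclose z hz hzd' k hk).not_ge hle

lemma exists_pair_right_of_three_le_ecc (hconn : G.Connected) (hB : IsBlockSet G B)
    (hbip : CompBipOn G B V1 V2) (hBne : B ≠ Set.univ) (hK : (B ∩ cutSet G).ncard ≤ 2)
    {x : V} (hx : x ∈ V1) (hxK : ¬ CutVtx G x) (hxc : x ∈ gcenter G) (h3 : 3 ≤ ecc G x) :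
    ∃ c c', c ≠ c' ∧ B ∩ cutSet G = {c, c'} ∧ c ∈ V2 ∧ c' ∈ V2 := by
  obtain ⟨w, hw⟩ := (Set.ne_univ_iff_exists_notMem B).mp hBne
  obtain ⟨c, hc, -⟩ := hB.exists_cutVtx_dist_add_le hconn (hbip.left_subset hx) hw
  obtain ⟨c', hc', hcc'⟩ : ∃ c' ∈ B ∩ cutSet G, c ≠ c' := by
    by_contra! hall
    obtain ⟨k, hk, hle⟩ :=
      hB.exists_dist_le_of_mem_gcenter hconn hbip (hbip.left_subset hx) hxc h3 hc.1
    rw [← hall k hk, dist_self] at hle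
    exact (hconn.preconnected x c).pos_dist_of_ne (fun h => hxK (h ▸ hc.2)) |>.ne'
      (Nat.le_zero.mp hle)
  have hKeq := Set.eq_pair_of_ncard_le_two hc hc' hcc' hK
  have hright : ∀ d ∈ B ∩ cutSet G, ∀ d', B ∩ cutSet G = {d, d'} → d ∈ V2 :=
    fun d hd d' hK2 => (hbip.mem_or_mem_s9 hd.1).resolve_left
      (hB.notMem_left_of_eq_pair hconn hbip hx hxK hxc h3 hK2)
  exact ⟨c, c', hcc', hKeq, hright c hc c' hKeq,
    hright c' hc' c (hKeq.trans (Set.pair_comm _ _))⟩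

lemma exists_pair_right_of_ecc_le_two (hconn : G.Connected) (hB : IsBlockSet G B)
    (hbip : CompBipOn G B V1 V2) (hK : (B ∩ cutSet G).ncard ≤ 2) {x : V} (hx : x ∈ V1)
    (hxK : ¬ CutVtx G x) (h2 : ecc G x ≤ 2) (h4 : 4 ≤ gdiam G) :
    ∃ c c', c ≠ c' ∧ B ∩ cutSet G = {c, c'} ∧ c ∈ V2 ∧ c' ∈ V2 := by
  have : Nonempty V := ⟨x⟩
  have hgate : ∀ w ∉ B, ∃ k ∈ B ∩ cutSet G, k ∈ V2 ∧ G.dist k w ≤ 1 := by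
    intro w hw
    obtain ⟨k, hk, hle⟩ := hB.exists_cutVtx_dist_add_le hconn (hbip.left_subset hx) hw
    have hxk := (hconn.preconnected x k).pos_dist_of_ne fun h => hxK (h ▸ hk.2)
    have hkw := (hconn.preconnected k w).pos_dist_of_ne fun h => hw (h ▸ hk.1)
    have hxw := dist_le_ecc G x w
    have hadj : G.Adj x k := dist_eq_one_iff_adj.mp (by omega)
    exact ⟨k, hk, hbip.mem_right_of_adj_s9 hx hk.1 hadj, by omega⟩
  have hout : ∀ a b, 4 ≤ G.dist a b → a ∉ B := by
    intro a b hab ha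
    by_cases hb : b ∈ B
    · have := hbip.dist_le_two_s9 ha hb
      omega
    obtain ⟨k, hk, -, hkb⟩ := hgate b hb
    have := hconn.dist_triangle (u := a) (v := k) (w := b)
    have := hbip.dist_le_two_s9 ha hk.1
    omega
  obtain ⟨a, ha⟩ := exists_ecc_eq_gdiam G
  obtain ⟨b, hb⟩ := exists_dist_eq_ecc G a
  have hab : 4 ≤ G.dist a b := by omega
  obtain ⟨ka, hka, hka2, hda⟩ := hgate a (hout a b hab)
  obtain ⟨kb, hkb, hkb2, hdb⟩ := hgate b (hout b a (SimpleGraph.dist_comm (G := G) ▸ hab))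
  have hne : ka ≠ kb := by
    rintro rfl
    have := hconn.dist_triangle (u := a) (v := ka) (w := b)
    rw [SimpleGraph.dist_comm] at hda
    omega
  exact ⟨ka, kb, hne, Set.eq_pair_of_ncard_le_two hka hkb hne hK, hka2, hkb2⟩

end CentralVertex

theorem stmt_9 {V : Type*} [Fintype V] (G : SimpleGraph V) (hG : ClassB G)
    (h4 : 4 ≤ gdiam G) (B0 V1 V2 : Set V) (hB : IsBlockSet G B0)
    (hbip : CompBipOn G B0 V1 V2)
    (x : V) (hx1 : x ∈ V1) (hxc : x ∈ gcenter G) (hnc : ¬ CutVtx G x) :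
    (B0 ∩ cutSet G).ncard = 2 ∧ B0 ∩ cutSet G ⊆ V2 := by
  obtain ⟨⟨hconn, -⟩, ⟨B1, B2, hB1, hB2, hB12⟩, hcut⟩ := hG
  suffices ∃ c c', c ≠ c' ∧ B0 ∩ cutSet G = {c, c'} ∧ c ∈ V2 ∧ c' ∈ V2 by
    obtain ⟨c, c', hcc', hK, hc, hc'⟩ := this
    rw [hK]
    exact ⟨Set.ncard_pair hcc', Set.pair_subset hc hc'⟩
  by_cases h3 : 3 ≤ ecc G x
  · exact exists_pair_right_of_three_le_ecc hconn hB hbip (hB.ne_univ hB1 hB2 hB12)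
      (hcut B0 hB) hx1 hnc hxc h3
  · exact exists_pair_right_of_ecc_le_two hconn hB hbip (hcut B0 hB) hx1 hnc (by omega) h4
end
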